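/- Suppose the real 4×4 matrix R has Lorentz singular values s0 ≥ s1 ≥ s2 ≥ |s3|. Then the infimum over all pairs of proper orthochronous Lorentz matrices L1, L2 of the (0,0)-entry (L1 · R · L2ᵀ)₀₀ equals s0, and this infimum is attained. -/
import Mathlib


open Matrix

noncomputable section

/-- The Minkowski metric η = diag(1,-1,-1,-1). -/
def η : Matrix (Fin 4) (Fin 4) ℝ := Matrix.diagonal ![1, -1, -1, -1]

/-- A proper orthochronous Lorentz matrix. -/
def LorentzPO (L : Matrix (Fin 4) (Fin 4) ℝ) : Prop :=
  Lᵀ * η * L = η ∧ L.det = 1 ∧ 1 ≤ L 0 0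

/-- `R` has Lorentz singular values `s 0 ≥ s 1 ≥ s 2 ≥ |s 3|`. -/
def HasLSV (R : Matrix (Fin 4) (Fin 4) ℝ) (s : Fin 4 → ℝ) : Prop :=
  s 1 ≤ s 0 ∧ s 2 ≤ s 1 ∧ |s 3| ≤ s 2 ∧
  ∃ L1 L2 : Matrix (Fin 4) (Fin 4) ℝ, LorentzPO L1 ∧ LorentzPO L2 ∧
    R = L1 * Matrix.diagonal s * L2ᵀ

lemma eta_sq : η * η = 1 := by
  ext i j
  fin_cases i <;> fin_cases j <;>
    simp [η, Matrix.mul_apply, Fin.sum_univ_four, Matrix.one_apply]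

lemma eta_eta_mul (X : Matrix (Fin 4) (Fin 4) ℝ) : η * (η * X) = X := by
  rw [← Matrix.mul_assoc, eta_sq, one_mul]

lemma key_cs (a0 a1 a2 a3 b0 b1 b2 b3 : ℝ)
    (ha : a0^2 = 1 + a1^2 + a2^2 + a3^2) (hb : b0^2 = 1 + b1^2 + b2^2 + b3^2)
    (ha0 : 1 ≤ a0) (hb0 : 1 ≤ b0) :
    |a1*b1| + |a2*b2| + |a3*b3| ≤ a0*b0 - 1 := by
  have hcs : (|a1*b1| + |a2*b2| + |a3*b3|)^2 ≤ (a1^2+a2^2+a3^2) * (b1^2+b2^2+b3^2) := by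
    rw [abs_mul, abs_mul, abs_mul]
    nlinarith [sq_nonneg (|a1| * |b2| - |a2| * |b1|), sq_nonneg (|a1| * |b3| - |a3| * |b1|),
      sq_nonneg (|a2| * |b3| - |a3| * |b2|), sq_abs a1, sq_abs a2, sq_abs a3,
      sq_abs b1, sq_abs b2, sq_abs b3]
  have hTnn : (0:ℝ) ≤ |a1*b1| + |a2*b2| + |a3*b3| := by positivity
  have hX : (0:ℝ) ≤ a0*b0 - 1 := by nlinarith
  have hsq : (|a1*b1| + |a2*b2| + |a3*b3|)^2 ≤ (a0*b0 - 1)^2 := by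
    nlinarith [sq_nonneg (a0 - b0)]
  nlinarith [hsq, hTnn, hX, sq_nonneg ((a0*b0 - 1) - (|a1*b1| + |a2*b2| + |a3*b3|)), sq_nonneg ((a0*b0 - 1) + (|a1*b1| + |a2*b2| + |a3*b3|))]

lemma main_ineq (s0 s1 s2 s3 a0 a1 a2 a3 b0 b1 b2 b3 : ℝ)
    (hs1 : s1 ≤ s0) (hs2 : s2 ≤ s1) (hs3 : |s3| ≤ s2)
    (ha : a0^2 = 1 + a1^2 + a2^2 + a3^2) (hb : b0^2 = 1 + b1^2 + b2^2 + b3^2)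
    (ha0 : 1 ≤ a0) (hb0 : 1 ≤ b0) :
    s0 ≤ s0*(a0*b0) + s1*(a1*b1) + s2*(a2*b2) + s3*(a3*b3) := by
  have hs2nn : 0 ≤ s2 := le_trans (abs_nonneg s3) hs3
  have hs1nn : 0 ≤ s1 := le_trans hs2nn hs2
  have hs0nn : 0 ≤ s0 := le_trans hs1nn hs1
  have hcs := key_cs a0 a1 a2 a3 b0 b1 b2 b3 ha hb ha0 hb0
  have h1 : -(s1 * |a1*b1|) ≤ s1*(a1*b1) := by
    nlinarith [neg_abs_le (a1*b1), abs_nonneg (a1*b1)]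
  have h2 : -(s1 * |a2*b2|) ≤ s2*(a2*b2) := by
    nlinarith [neg_abs_le (a2*b2), abs_nonneg (a2*b2)]
  have h3 : -(s1 * |a3*b3|) ≤ s3*(a3*b3) := by
    have habs : |s3*(a3*b3)| ≤ s1 * |a3*b3| := by
      rw [abs_mul]
      exact mul_le_mul (le_trans hs3 hs2) le_rfl (abs_nonneg _) hs1nn
    nlinarith [neg_abs_le (s3*(a3*b3))]
  have hT : s1 * (|a1*b1| + |a2*b2| + |a3*b3|) ≤ s0 * (a0*b0 - 1) := by
    have e1 : s1 * (|a1*b1| + |a2*b2| + |a3*b3|) ≤ s1 * (a0*b0 - 1) :=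
      mul_le_mul_of_nonneg_left hcs hs1nn
    have hX : (0:ℝ) ≤ a0*b0 - 1 := by nlinarith
    nlinarith
  nlinarith

lemma lpo_invs {L : Matrix (Fin 4) (Fin 4) ℝ} (h : LorentzPO L) :
    (η * Lᵀ * η) * L = 1 ∧ L * (η * Lᵀ * η) = 1 := by
  obtain ⟨h1, -, -⟩ := h
  have hli : (η * Lᵀ * η) * L = 1 := by
    calc (η * Lᵀ * η) * L = η * (Lᵀ * η * L) := by simp only [Matrix.mul_assoc]
    _ = η * η := by rw [h1]
    _ = 1 := eta_sq
  exact ⟨hli, mul_eq_one_comm.mp hli⟩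

lemma lpo_rowrel {L : Matrix (Fin 4) (Fin 4) ℝ} (h : LorentzPO L) :
    L * η * Lᵀ = η := by
  obtain ⟨-, hri⟩ := lpo_invs h
  have h1 : L * η * Lᵀ * η = 1 := by
    simp only [Matrix.mul_assoc] at hri ⊢; exact hri
  calc L * η * Lᵀ = L * η * Lᵀ * (η * η) := by rw [eta_sq, Matrix.mul_one]
  _ = (L * η * Lᵀ * η) * η := by simp only [Matrix.mul_assoc]
  _ = η := by rw [h1, one_mul]

lemma lpo_inv {L : Matrix (Fin 4) (Fin 4) ℝ} (h : LorentzPO L) :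
    LorentzPO (η * Lᵀ * η) := by
  obtain ⟨h1, h2, h3⟩ := h
  obtain ⟨hli, hri⟩ := lpo_invs ⟨h1, h2, h3⟩
  have hri' : L * (η * (Lᵀ * η)) = 1 := by
    simp only [Matrix.mul_assoc] at hri; exact hri
  refine ⟨?_, ?_, ?_⟩
  · have ht : (η * Lᵀ * η)ᵀ = η * (L * η) := by
      simp [Matrix.transpose_mul, η, Matrix.diagonal_transpose, Matrix.mul_assoc]
    rw [ht]
    simp only [Matrix.mul_assoc]
    rw [eta_eta_mul (η * (Lᵀ * η))]
    rw [hri', Matrix.mul_one]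
  · have hdet : η.det * η.det = 1 := by
      have := congrArg Matrix.det eta_sq
      rwa [Matrix.det_mul, Matrix.det_one] at this
    calc (η * Lᵀ * η).det = η.det * Lᵀ.det * η.det := by rw [Matrix.det_mul, Matrix.det_mul]
    _ = (η.det * η.det) * L.det := by rw [Matrix.det_transpose]; ring
    _ = 1 := by rw [hdet, h2, one_mul]
  · have : (η * Lᵀ * η) 0 0 = L 0 0 := by
      simp [η, Matrix.diagonal_mul, Matrix.mul_diagonal]
    rw [this]; exact h3

lemma lpo_row {L : Matrix (Fin 4) (Fin 4) ℝ} (h : LorentzPO L) :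
    (L 0 0)^2 = 1 + (L 0 1)^2 + (L 0 2)^2 + (L 0 3)^2 := by
  have hrow := lpo_rowrel h
  have := congrFun (congrFun hrow 0) 0
  simp [Matrix.mul_apply, η, Fin.sum_univ_four, Matrix.diagonal] at this
  nlinarith [this]

lemma lpo_col {L : Matrix (Fin 4) (Fin 4) ℝ} (h : LorentzPO L) :
    (L 0 0)^2 = 1 + (L 1 0)^2 + (L 2 0)^2 + (L 3 0)^2 := by
  have := congrFun (congrFun h.1 0) 0
  simp [Matrix.mul_apply, η, Fin.sum_univ_four, Matrix.diagonal] at this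
  nlinarith [this]

lemma lpo_mul {A B : Matrix (Fin 4) (Fin 4) ℝ} (hA : LorentzPO A) (hB : LorentzPO B) :
    LorentzPO (A * B) := by
  obtain ⟨hA1, hA2, hA3⟩ := hA
  obtain ⟨hB1, hB2, hB3⟩ := hB
  refine ⟨?_, ?_, ?_⟩
  · have step1 : (A*B)ᵀ * η * (A*B) = Bᵀ * (Aᵀ * η * A) * B := by
      rw [Matrix.transpose_mul]; simp only [Matrix.mul_assoc]
    rw [step1, hA1]; exact hB1
  · rw [Matrix.det_mul, hA2, hB2, one_mul]
  · have hrowA := lpo_row ⟨hA1, hA2, hA3⟩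
    have hcolB := lpo_col ⟨hB1, hB2, hB3⟩
    have hval : (A*B) 0 0 = A 0 0 * B 0 0 + A 0 1 * B 1 0 + A 0 2 * B 2 0 + A 0 3 * B 3 0 := by
      simp [Matrix.mul_apply, Fin.sum_univ_four]
    rw [hval]
    have := main_ineq 1 1 1 1 (A 0 0) (A 0 1) (A 0 2) (A 0 3) (B 0 0) (B 1 0) (B 2 0) (B 3 0)
      le_rfl le_rfl (by norm_num) hrowA hcolB hA3 hB3
    linarith

theorem lsv_variational_s0 (R : Matrix (Fin 4) (Fin 4) ℝ) (s : Fin 4 → ℝ)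
    (h : HasLSV R s) :
    IsLeast {x : ℝ | ∃ L1 L2 : Matrix (Fin 4) (Fin 4) ℝ,
        LorentzPO L1 ∧ LorentzPO L2 ∧ x = (L1 * R * L2ᵀ) 0 0}
      (s 0) := by
  obtain ⟨hs1, hs2, hs3, M1, M2, hM1, hM2, hR⟩ := h
  constructor
  · obtain ⟨hli1, hri1⟩ := lpo_invs hM1
    obtain ⟨hli2, hri2⟩ := lpo_invs hM2
    refine ⟨η * M1ᵀ * η, η * M2ᵀ * η, lpo_inv hM1, lpo_inv hM2, ?_⟩
    have key : (η * M1ᵀ * η) * R * (η * M2ᵀ * η)ᵀ = Matrix.diagonal s := by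
      rw [hR]
      have h2 : M2ᵀ * (η * M2ᵀ * η)ᵀ = 1 := by
        rw [← Matrix.transpose_mul, hli2, Matrix.transpose_one]
      calc (η * M1ᵀ * η) * (M1 * Matrix.diagonal s * M2ᵀ) * (η * M2ᵀ * η)ᵀ
          = ((η * M1ᵀ * η) * M1) * (Matrix.diagonal s * (M2ᵀ * (η * M2ᵀ * η)ᵀ)) := by
            simp only [Matrix.mul_assoc]
      _ = Matrix.diagonal s := by rw [hli1, h2, Matrix.mul_one, one_mul]
    rw [key]
    simp
  · rintro x ⟨L1, L2, hL1, hL2, rfl⟩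
    have hA := lpo_mul hL1 hM1
    have hB := lpo_mul hL2 hM2
    set A := L1 * M1 with hAdef
    set B := L2 * M2 with hBdef
    have hval : L1 * R * L2ᵀ = A * Matrix.diagonal s * Bᵀ := by
      rw [hR, hAdef, hBdef, Matrix.transpose_mul]
      simp only [Matrix.mul_assoc]
    rw [hval]
    have hentry : (A * Matrix.diagonal s * Bᵀ) 0 0 =
        s 0 * (A 0 0 * B 0 0) + s 1 * (A 0 1 * B 0 1) + s 2 * (A 0 2 * B 0 2)
          + s 3 * (A 0 3 * B 0 3) := by
      simp [Matrix.mul_apply, Fin.sum_univ_four, Matrix.diagonal]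
      ring
    rw [hentry]
    exact main_ineq (s 0) (s 1) (s 2) (s 3) (A 0 0) (A 0 1) (A 0 2) (A 0 3)
      (B 0 0) (B 0 1) (B 0 2) (B 0 3) hs1 hs2 hs3 (lpo_row hA) (lpo_row hB)
      hA.2.2 hB.2.2
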